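/- Let n, d be positive integers. Then there exists a reduced decision rule system S such that n(S) = n + d, k(S) = 1, d(S) = d, |S| = n + 1, and T_EAD(S) ≥ 2^{n+1}. -/

import Mathlib

/- Common formal framework for decision rule systems and decision trees /
   acyclic decision graphs, following Durdymyradov & Moshkov. -/

attribute [local instance] Classical.propDecidable

noncomputable section

namespace DRS

/-- A decision rule `(a_{i₁}=δ₁) ∧ ⋯ ∧ (a_{i_m}=δ_m) → σ`:
`K` is the finite set of equations (attribute index, value), `rhs` is σ. -/
structure Rule where
  K : Finset (ℕ × ℕ)
  rhs : ℕ

/-- Well-formedness of a rule: the attributes on its left-hand side are pairwise different. -/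
def Rule.WF (r : Rule) : Prop := ∀ p ∈ r.K, ∀ q ∈ r.K, p.1 = q.1 → p = q

/-- A(r): the set of attributes of a rule. -/
def Rule.attrs (r : Rule) : Finset ℕ := r.K.image Prod.fst

/-- The length m of a rule. -/
def Rule.len (r : Rule) : ℕ := r.K.card

/-- A(S) -/
def attrs (S : Finset Rule) : Finset ℕ := S.biUnion Rule.attrs

/-- n(S) -/
def nPar (S : Finset Rule) : ℕ := (attrs S).card

/-- d(S): the maximum length of a rule of S. -/
def dPar (S : Finset Rule) : ℕ := S.sup Rule.len

/-- D(S): the set of right-hand sides. -/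
def rhsSet (S : Finset Rule) : Finset ℕ := S.image Rule.rhs

/-- V_S(a_i) -/
def VS (S : Finset Rule) (i : ℕ) : Finset ℕ :=
  ((S.biUnion Rule.K).filter fun p => p.1 = i).image Prod.snd

/-- k(S) -/
def kPar (S : Finset Rule) : ℕ := (attrs S).sup fun i => (VS S i).card

/-- Attribute values in trees are `Option ℕ`; `none` plays the role of the special value `*`.
`allowed S false i` is (the lift of) `V_S(a_i)`, and `allowed S true i` is `EV_S(a_i)`. -/
def allowed (S : Finset Rule) (ext : Bool) (i : ℕ) : Finset (Option ℕ) :=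
  (VS S i).image some ∪ (if ext then {none} else ∅)

/-- Consistency of an equation system over ω ∪ {*}. -/
def ConsistentE (E : Finset (ℕ × Option ℕ)) : Prop :=
  ∀ p ∈ E, ∀ q ∈ E, p.1 = q.1 → p.2 = q.2

/-- Lift the left-hand side of a rule to an equation system over ω ∪ {*}. -/
def liftK (K : Finset (ℕ × ℕ)) : Finset (ℕ × Option ℕ) :=
  K.image fun p => (p.1, some p.2)

/-- A finite directed labeled graph: the nodes are `0, …, n-1`, with a distinguished root,
each node carries either an attribute (working node) or a set of rules (terminal node),
and edges are labeled with elements of ω ∪ {*}. -/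
structure DGraph where
  n : ℕ
  root : ℕ
  label : ℕ → ℕ ⊕ Finset Rule
  edges : Finset (ℕ × Option ℕ × ℕ)

namespace DGraph

def step (G : DGraph) (u v : ℕ) : Prop := ∃ l, (u, l, v) ∈ G.edges

/-- The graph has no directed cycles. -/
def Acyclic (G : DGraph) : Prop := ∀ v, ¬ Relation.TransGen G.step v v

/-- A node is terminal if no edge leaves it. -/
def IsTerminal (G : DGraph) (v : ℕ) : Prop := ∀ e ∈ G.edges, e.1 ≠ v

/-- The set of rules attached to a (terminal) node. -/
def termSet (G : DGraph) (v : ℕ) : Finset Rule :=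
  Sum.elim (fun _ => (∅ : Finset Rule)) id (G.label v)

/-- `G` is an acyclic decision graph over the rule system `S`;
`ext = false` : branching over `V_S` (o-type), `ext = true` : branching over `EV_S` (e-type).
Terminal nodes are labeled with subsets of S; each working node is labeled with an
attribute `a` of `A(S)` and has exactly one leaving edge for every element of
`V_S(a)` (resp. `EV_S(a)`), the edges leaving it being labeled with these
pairwise different elements. -/
def IsDG (G : DGraph) (S : Finset Rule) (ext : Bool) : Prop :=
  G.root < G.n ∧
  (∀ e ∈ G.edges, e.1 < G.n ∧ e.2.2 < G.n) ∧
  G.Acyclic ∧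
  (∀ v < G.n,
    if G.IsTerminal v then
      ∃ Z : Finset Rule, G.label v = Sum.inr Z ∧ Z ⊆ S
    else
      ∃ a : ℕ, G.label v = Sum.inl a ∧ a ∈ attrs S ∧
        (∀ l : Option ℕ, (∃ w, (v, l, w) ∈ G.edges) ↔ l ∈ allowed S ext a) ∧
        (∀ l w w', (v, l, w) ∈ G.edges → (v, l, w') ∈ G.edges → w = w'))

/-- `G` is a finite directed tree with root: the root has no entering edge and every
other node has exactly one entering edge (together with acyclicity this makes the
graph a rooted tree). -/
def IsTree (G : DGraph) : Prop :=
  (∀ e ∈ G.edges, e.2.2 ≠ G.root) ∧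
  (∀ v < G.n, v ≠ G.root → ∃! e, e ∈ G.edges ∧ e.2.2 = v)

/-- `chainFrom G v p t`: the list `p` of (node, leaving-edge-label) pairs forms a
directed path in `G` starting at `v` and ending at `t`. -/
def chainFrom (G : DGraph) : ℕ → List (ℕ × Option ℕ) → ℕ → Prop
  | v, [], t => v = t
  | v, e :: rest, t => e.1 = v ∧ ∃ w, (v, e.2, w) ∈ G.edges ∧ chainFrom G w rest t

/-- A complete path: from the root to a terminal node; it is recorded by the list of
its working nodes with the labels of the edges taken, together with its terminal node. -/
def IsCompletePath (G : DGraph) (p : List (ℕ × Option ℕ)) (t : ℕ) : Prop :=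
  G.chainFrom G.root p t ∧ G.IsTerminal t ∧ t < G.n

/-- K(ξ): the equation system associated with a complete path. -/
def pathEqs (G : DGraph) (p : List (ℕ × Option ℕ)) : Finset (ℕ × Option ℕ) :=
  (p.filterMap fun e =>
    Sum.elim (fun a => some (a, e.2)) (fun _ => none) (G.label e.1)).toFinset

/-- L(Γ): the number of nodes. -/
def size (G : DGraph) : ℕ := G.n

/-- T(Γ): the number of terminal nodes labeled with pairwise different sets of rules. -/
def tCount (G : DGraph) : ℕ :=
  (((Finset.range G.n).filter fun v => G.IsTerminal v).image fun v => G.termSet v).card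

/-- h(Γ): the maximum number of working nodes on a complete path. -/
def depth (G : DGraph) : ℕ :=
  sSup {m | ∃ p t, G.IsCompletePath p t ∧ p.length = m}

/-- Path conditions for (the solutions of) the problems All Rules / EAll Rules. -/
def SolvesAR (G : DGraph) (S : Finset Rule) : Prop :=
  ∀ p t, G.IsCompletePath p t → ConsistentE (G.pathEqs p) →
    (∀ r ∈ G.termSet t, liftK r.K ⊆ G.pathEqs p) ∧
    (∀ r ∈ S, r ∉ G.termSet t → ¬ ConsistentE (liftK r.K ∪ G.pathEqs p))

/-- Path conditions for the problems All Decisions / EAll Decisions. -/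
def SolvesAD (G : DGraph) (S : Finset Rule) : Prop :=
  ∀ p t, G.IsCompletePath p t → ConsistentE (G.pathEqs p) →
    (∀ r ∈ G.termSet t, liftK r.K ⊆ G.pathEqs p) ∧
    (∀ r ∈ S, r ∉ G.termSet t → r.rhs ∉ (G.termSet t).image Rule.rhs →
      ¬ ConsistentE (liftK r.K ∪ G.pathEqs p))

/-- Path conditions for the problems Some Rules / ESome Rules. -/
def SolvesSR (G : DGraph) (S : Finset Rule) : Prop :=
  ∀ p t, G.IsCompletePath p t → ConsistentE (G.pathEqs p) →
    (∀ r ∈ G.termSet t, liftK r.K ⊆ G.pathEqs p) ∧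
    (G.termSet t = ∅ → ∀ r ∈ S, ¬ ConsistentE (liftK r.K ∪ G.pathEqs p))

end DGraph

/-- Γ is a decision tree over S solving AR(S) (an o-tree). -/
def TreeSolvesAR (S : Finset Rule) (G : DGraph) : Prop :=
  G.IsDG S false ∧ G.IsTree ∧ G.SolvesAR S
/-- Γ is a decision tree over S solving EAR(S) (an e-tree). -/
def TreeSolvesEAR (S : Finset Rule) (G : DGraph) : Prop :=
  G.IsDG S true ∧ G.IsTree ∧ G.SolvesAR S
/-- Γ is a decision tree over S solving AD(S) (an o-tree). -/
def TreeSolvesAD (S : Finset Rule) (G : DGraph) : Prop :=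
  G.IsDG S false ∧ G.IsTree ∧ G.SolvesAD S
/-- Γ is a decision tree over S solving EAD(S) (an e-tree). -/
def TreeSolvesEAD (S : Finset Rule) (G : DGraph) : Prop :=
  G.IsDG S true ∧ G.IsTree ∧ G.SolvesAD S
/-- Γ is a decision tree over S solving SR(S) (an o-tree). -/
def TreeSolvesSR (S : Finset Rule) (G : DGraph) : Prop :=
  G.IsDG S false ∧ G.IsTree ∧ G.SolvesSR S
/-- Γ is a decision tree over S solving ESR(S) (an e-tree). -/
def TreeSolvesESR (S : Finset Rule) (G : DGraph) : Prop :=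
  G.IsDG S true ∧ G.IsTree ∧ G.SolvesSR S

/-- L_AR(S): minimum number of nodes of a decision tree over S solving AR(S). -/
def L_AR (S : Finset Rule) : ℕ := sInf {m | ∃ G : DGraph, TreeSolvesAR S G ∧ G.size = m}
def L_EAR (S : Finset Rule) : ℕ := sInf {m | ∃ G : DGraph, TreeSolvesEAR S G ∧ G.size = m}
def L_AD (S : Finset Rule) : ℕ := sInf {m | ∃ G : DGraph, TreeSolvesAD S G ∧ G.size = m}
def L_EAD (S : Finset Rule) : ℕ := sInf {m | ∃ G : DGraph, TreeSolvesEAD S G ∧ G.size = m}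
def L_SR (S : Finset Rule) : ℕ := sInf {m | ∃ G : DGraph, TreeSolvesSR S G ∧ G.size = m}
def L_ESR (S : Finset Rule) : ℕ := sInf {m | ∃ G : DGraph, TreeSolvesESR S G ∧ G.size = m}

/-- T_AR(S): minimum number of differently-labeled terminal nodes of a decision tree
over S solving AR(S); similarly for the other problems. -/
def T_AR (S : Finset Rule) : ℕ := sInf {m | ∃ G : DGraph, TreeSolvesAR S G ∧ G.tCount = m}
def T_EAR (S : Finset Rule) : ℕ := sInf {m | ∃ G : DGraph, TreeSolvesEAR S G ∧ G.tCount = m}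
def T_AD (S : Finset Rule) : ℕ := sInf {m | ∃ G : DGraph, TreeSolvesAD S G ∧ G.tCount = m}
def T_EAD (S : Finset Rule) : ℕ := sInf {m | ∃ G : DGraph, TreeSolvesEAD S G ∧ G.tCount = m}
def T_SR (S : Finset Rule) : ℕ := sInf {m | ∃ G : DGraph, TreeSolvesSR S G ∧ G.tCount = m}
def T_ESR (S : Finset Rule) : ℕ := sInf {m | ∃ G : DGraph, TreeSolvesESR S G ∧ G.tCount = m}

/-- h_AR(S): minimum depth of a decision tree over S solving AR(S); similarly for the others. -/
def h_AR (S : Finset Rule) : ℕ := sInf {m | ∃ G : DGraph, TreeSolvesAR S G ∧ G.depth = m}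
def h_EAR (S : Finset Rule) : ℕ := sInf {m | ∃ G : DGraph, TreeSolvesEAR S G ∧ G.depth = m}
def h_AD (S : Finset Rule) : ℕ := sInf {m | ∃ G : DGraph, TreeSolvesAD S G ∧ G.depth = m}
def h_EAD (S : Finset Rule) : ℕ := sInf {m | ∃ G : DGraph, TreeSolvesEAD S G ∧ G.depth = m}
def h_SR (S : Finset Rule) : ℕ := sInf {m | ∃ G : DGraph, TreeSolvesSR S G ∧ G.depth = m}
def h_ESR (S : Finset Rule) : ℕ := sInf {m | ∃ G : DGraph, TreeSolvesESR S G ∧ G.depth = m}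

/-- L^DG_SR(S): minimum number of nodes of an acyclic decision graph solving SR(S). -/
def LDG_SR (S : Finset Rule) : ℕ :=
  sInf {m | ∃ G : DGraph, G.IsDG S false ∧ G.SolvesSR S ∧ G.size = m}
/-- L^DG_ESR(S): minimum number of nodes of an acyclic decision graph solving ESR(S). -/
def LDG_ESR (S : Finset Rule) : ℕ :=
  sInf {m | ∃ G : DGraph, G.IsDG S true ∧ G.SolvesSR S ∧ G.size = m}

/-- A node cover of the hypergraph G(S). -/
def IsNodeCover (S : Finset Rule) (B : Finset ℕ) : Prop :=
  B ⊆ attrs S ∧ ∀ r ∈ S, (Rule.attrs r).Nonempty → (Rule.attrs r ∩ B).Nonempty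

/-- β(S): the minimum cardinality of a node cover of the hypergraph G(S). -/
def beta (S : Finset Rule) : ℕ := sInf {c | ∃ B, IsNodeCover S B ∧ B.card = c}

/-- S⁺: the subsystem of S consisting of all rules of length d(S). -/
def Splus (S : Finset Rule) : Finset Rule := S.filter fun r => r.len = dPar S

/-- β⁺(S) = β(S⁺). -/
def betaPlus (S : Finset Rule) : ℕ := beta (Splus S)

/-- The rule r_α : delete from the left-hand side of r all equations belonging to α. -/
def Rule.restrict (r : Rule) (α : Finset (ℕ × Option ℕ)) : Rule :=
  ⟨r.K.filter fun p => (p.1, some p.2) ∉ α, r.rhs⟩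

/-- S_α : the system of the rules r_α for all r ∈ S with K(r) ∪ α consistent. -/
def restrict (S : Finset Rule) (α : Finset (ℕ × Option ℕ)) : Finset Rule :=
  (S.filter fun r => ConsistentE (liftK r.K ∪ α)).image fun r => r.restrict α

/-- E_C(S): consistent equation systems whose attributes are in A(S) and whose
values belong to V_S (ext = false) resp. EV_S (ext = true). -/
def ESys (S : Finset Rule) (ext : Bool) : Set (Finset (ℕ × Option ℕ)) :=
  {α | ConsistentE α ∧ ∀ p ∈ α, p.1 ∈ attrs S ∧ p.2 ∈ allowed S ext p.1}

/-- I_SR(S). -/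
def I_SR (S : Finset Rule) : Finset Rule :=
  if ∃ r ∈ S, r.len = 0 then S.filter fun r => r.len = 0 else S

/-- D₀(S): the right-hand sides of the rules of S of length 0. -/
def D0 (S : Finset Rule) : Finset ℕ := (S.filter fun r => r.len = 0).image Rule.rhs

/-- I_AD(S). -/
def I_AD (S : Finset Rule) : Finset Rule :=
  S.filter fun r => r.len = 0 ∨ r.rhs ∉ D0 S

def betaC (S : Finset Rule) (ext : Bool) : ℕ :=
  sSup {b | ∃ α ∈ ESys S ext, beta (restrict S α) = b}
def betaCplus (S : Finset Rule) (ext : Bool) : ℕ :=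
  sSup {b | ∃ α ∈ ESys S ext, betaPlus (restrict S α) = b}
def betaI (S : Finset Rule) (I : Finset Rule → Finset Rule) : ℕ :=
  sSup {b | ∃ α ∈ ESys S true, beta (I (restrict S α)) = b}
def betaIplus (S : Finset Rule) (I : Finset Rule → Finset Rule) : ℕ :=
  sSup {b | ∃ α ∈ ESys S true, betaPlus (I (restrict S α)) = b}

def beta_AR (S : Finset Rule) : ℕ := betaC S false
def beta_AD (S : Finset Rule) : ℕ := betaC S false
def beta_SR (S : Finset Rule) : ℕ := betaC S false
def beta_EAR (S : Finset Rule) : ℕ := betaC S true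
def beta_ARplus (S : Finset Rule) : ℕ := betaCplus S false
def beta_ADplus (S : Finset Rule) : ℕ := betaCplus S false
def beta_SRplus (S : Finset Rule) : ℕ := betaCplus S false
def beta_EARplus (S : Finset Rule) : ℕ := betaCplus S true
def beta_EAD (S : Finset Rule) : ℕ := betaI S I_AD
def beta_EADplus (S : Finset Rule) : ℕ := betaIplus S I_AD
def beta_ESR (S : Finset Rule) : ℕ := betaI S I_SR
def beta_ESRplus (S : Finset Rule) : ℕ := betaIplus S I_SR

/-- R_SR(S). -/
def R_SR (S : Finset Rule) : Finset Rule :=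
  S.filter fun r => ¬ ∃ r' ∈ S, r'.K ⊂ r.K

/-- R_AD(S). -/
def R_AD (S : Finset Rule) : Finset Rule :=
  S.filter fun r => ¬ ∃ r' ∈ S, r'.K ⊂ r.K ∧ r'.rhs = r.rhs

/-- A reduced decision rule system. -/
def Reduced (S : Finset Rule) : Prop :=
  attrs S ⊆ Finset.range (nPar S + 1) ∧
  rhsSet S ⊆ Finset.range ((rhsSet S).card + 1) ∧
  (∀ i ∈ attrs S, VS S i ⊆ Finset.range (kPar S + 1)) ∧
  1 ≤ dPar S

/-- Length of the binary representation of a natural number. -/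
def bitLen (m : ℕ) : ℕ := max 1 (Nat.size m)

/-- The length of the word "(a⟨i⟩=⟨δ⟩)" encoding one equation. -/
def eqLen (p : ℕ × ℕ) : ℕ := 4 + bitLen p.1 + bitLen p.2

/-- The length of the word encoding one rule (with the "∧" signs and "→"). -/
def Rule.wordLen (r : Rule) : ℕ :=
  (∑ p ∈ r.K, eqLen p) + (r.K.card - 1) + 1 + bitLen r.rhs

/-- size(S): the length of the word representing S (with ";" separating the rules). -/
def sizeS (S : Finset Rule) : ℕ := (∑ r ∈ S, r.wordLen) + (S.card - 1)

/-!
Take the `n` rules `a_i = 0 → i + 1` (`i < n`) and the rule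
`a_n = 0 ∧ ⋯ ∧ a_{n+d-1} = 0 → 0`. Their attribute sets are pairwise disjoint and their
right-hand sides distinct, so for every subset `B` of the system some assignment of values in
`{0, *}` satisfies exactly the rules of `B`. Any tree solving EAD leads this assignment to a
terminal node labeled by exactly `B`: the rules of `B` must be realized, and every other rule
must be refuted since its decision is not among those given. Hence such a tree has at least
`2 ^ (n + 1)` differently labeled terminal nodes. The complete binary tree that queries every
attribute solves EAD; this is needed because `T_EAD` is an infimum in `ℕ`, where `sInf ∅ = 0`.
-/

open Finset

lemma mem_attrs_of_mem_K {S : Finset Rule} {r : Rule} (hr : r ∈ S) {q : ℕ × ℕ}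
    (hq : q ∈ r.K) : q.1 ∈ attrs S :=
  mem_biUnion.2 ⟨r, hr, mem_image_of_mem _ hq⟩

lemma mem_VS_of_mem_K {S : Finset Rule} {r : Rule} (hr : r ∈ S) {q : ℕ × ℕ}
    (hq : q ∈ r.K) : q.2 ∈ VS S q.1 :=
  mem_image.2 ⟨q, mem_filter.2 ⟨mem_biUnion.2 ⟨r, hr, hq⟩, rfl⟩, rfl⟩

lemma VS_eq_singleton_zero {S : Finset Rule} (h0 : ∀ r ∈ S, ∀ q ∈ r.K, q.2 = 0) {a : ℕ}
    (ha : a ∈ attrs S) : VS S a = {0} := by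
  obtain ⟨r, hr, hra⟩ := mem_biUnion.1 ha
  obtain ⟨q, hq, rfl⟩ := mem_image.1 hra
  refine eq_singleton_iff_unique_mem.2 ⟨h0 r hr q hq ▸ mem_VS_of_mem_K hr hq, ?_⟩
  simp only [VS, mem_image, mem_filter, mem_biUnion]
  rintro _ ⟨q', ⟨⟨r', hr', hq'⟩, -⟩, rfl⟩
  exact h0 r' hr' q' hq'

lemma consistentE_of_forall_eq {E : Finset (ℕ × Option ℕ)} {f : ℕ → Option ℕ}
    (h : ∀ x ∈ E, x.2 = f x.1) : ConsistentE E := by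
  intro x hx y hy hxy
  rw [h x hx, h y hy, hxy]

namespace DGraph

variable {G : DGraph} {S : Finset Rule}

lemma termSet_subset (hG : G.IsDG S true) {t : ℕ} (ht : G.IsTerminal t) (htn : t < G.n) :
    G.termSet t ⊆ S := by
  obtain ⟨Z, hZ, hZS⟩ := by simpa only [if_pos ht] using hG.2.2.2 t htn
  rwa [termSet, hZ]

lemma pathEqs_cons_of_label_eq {u a : ℕ} (hu : G.label u = Sum.inl a) (l : Option ℕ)
    (p : List (ℕ × Option ℕ)) : G.pathEqs ((u, l) :: p) = insert (a, l) (G.pathEqs p) := by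
  simp [pathEqs, hu]

lemma exists_chainFrom_terminal (hG : G.IsDG S true) {f : ℕ → Option ℕ}
    (hf : ∀ a ∈ attrs S, f a ∈ allowed S true a) {v : ℕ} (hv : v < G.n) :
    ∃ p t, G.chainFrom v p t ∧ G.IsTerminal t ∧ t < G.n ∧
      ∀ e ∈ p, ∃ a, G.label e.1 = Sum.inl a ∧ e.2 = f a := by
  obtain ⟨-, hedge, hacyc, hnode⟩ := hG
  let desc (u : ℕ) : Finset ℕ := (range G.n).filter (Relation.ReflTransGen G.step u)
  induction hk : (desc v).card using Nat.strong_induction_on generalizing v with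
  | _ k ih =>
  by_cases ht : G.IsTerminal v
  · exact ⟨[], v, rfl, ht, hv, by simp⟩
  obtain ⟨a, hlab, ha, hout, -⟩ := by simpa only [if_neg ht] using hnode v hv
  obtain ⟨w, hw⟩ := (hout (f a)).2 (hf a ha)
  have hstep : G.step v w := ⟨f a, hw⟩
  -- acyclicity makes the set of descendants shrink strictly along every edge
  have hlt : (desc w).card < (desc v).card := by
    refine card_lt_card ((ssubset_iff_of_subset fun x hx => ?_).2 ⟨v, ?_, ?_⟩)
    · obtain ⟨hxn, hwx⟩ := mem_filter.1 hx
      exact mem_filter.2 ⟨hxn, .head hstep hwx⟩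
    · exact mem_filter.2 ⟨mem_range.2 hv, .refl⟩
    · exact fun hvw => hacyc v (.head' hstep (mem_filter.1 hvw).2)
  obtain ⟨p, t, hp, ht, htn, hlabels⟩ := ih _ (hk ▸ hlt) (hedge _ hw).2 rfl
  refine ⟨(v, f a) :: p, t, ⟨rfl, w, hw, hp⟩, ht, htn, ?_⟩
  rintro e (_ | ⟨_, he⟩)
  exacts [⟨a, hlab, rfl⟩, hlabels e he]

lemma exists_completePath_of_assignment (hG : G.IsDG S true) {f : ℕ → Option ℕ}
    (hf : ∀ a ∈ attrs S, f a ∈ allowed S true a) :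
    ∃ p t, G.IsCompletePath p t ∧ ∀ x ∈ G.pathEqs p, x.2 = f x.1 := by
  obtain ⟨p, t, hp, ht, htn, hlabels⟩ := exists_chainFrom_terminal hG hf hG.1
  refine ⟨p, t, ⟨hp, ht, htn⟩, fun x hx => ?_⟩
  obtain ⟨e, he, hex⟩ := List.mem_filterMap.1 (List.mem_toFinset.1 hx)
  obtain ⟨a, hlab, hea⟩ := hlabels e he
  rw [hlab, Sum.elim_inl, Option.some.injEq] at hex
  rw [← hex, hea]

lemma exists_terminal_termSet_eq_filter (hG : G.IsDG S true) (hAD : G.SolvesAD S)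
    (hrhs : Set.InjOn Rule.rhs S) {f : ℕ → Option ℕ}
    (hf : ∀ a ∈ attrs S, f a ∈ allowed S true a) :
    ∃ t < G.n, G.IsTerminal t ∧
      G.termSet t = S.filter fun r => ∀ q ∈ r.K, f q.1 = some q.2 := by
  obtain ⟨p, t, hpath, hpf⟩ := exists_completePath_of_assignment hG hf
  obtain ⟨hrealized, hrefuted⟩ := hAD p t hpath (consistentE_of_forall_eq hpf)
  have hτS := termSet_subset hG hpath.2.1 hpath.2.2
  refine ⟨t, hpath.2.2, hpath.2.1, ext fun r => ⟨fun hr => ?_, fun hr => ?_⟩⟩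
  · refine mem_filter.2 ⟨hτS hr, fun q hq => ?_⟩
    exact (hpf _ (hrealized r hr (mem_image_of_mem _ hq))).symm
  · obtain ⟨hrS, hsat⟩ := mem_filter.1 hr
    by_contra hrτ
    refine hrefuted r hrS hrτ ?_ (consistentE_of_forall_eq (f := f) fun x hx => ?_)
    · intro hrhsτ
      obtain ⟨r', hr', hrr'⟩ := mem_image.1 hrhsτ
      exact hrτ (hrhs (hτS hr') hrS hrr' ▸ hr')
    · rcases mem_union.1 hx with hx | hx
      · obtain ⟨q, hq, rfl⟩ := mem_image.1 hx
        exact (hsat q hq).symm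
      · exact hpf x hx

end DGraph

lemma exists_assignment_filter_eq {S : Finset Rule} (hwf : ∀ r ∈ S, r.WF)
    (hne : ∀ r ∈ S, r.K.Nonempty) (hdisj : (S : Set Rule).PairwiseDisjoint Rule.attrs)
    {B : Finset Rule} (hB : B ⊆ S) :
    ∃ f : ℕ → Option ℕ, (∀ a ∈ attrs S, f a ∈ allowed S true a) ∧
      S.filter (fun r => ∀ q ∈ r.K, f q.1 = some q.2) = B := by
  let f (a : ℕ) : Option ℕ :=
    if h : ∃ q ∈ B.biUnion Rule.K, q.1 = a then some h.choose.2 else none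
  have hsame : ∀ r ∈ S, ∀ r' ∈ B, ∀ q ∈ r.K, ∀ q' ∈ r'.K, q'.1 = q.1 → r' = r :=
    fun r hr r' hr' q hq q' hq' hqq' => hdisj.elim_finset (hB hr') hr q.1
      (hqq' ▸ mem_image_of_mem _ hq') (mem_image_of_mem _ hq)
  have hsat : ∀ r ∈ S, ∀ q ∈ r.K, f q.1 = some q.2 ↔ r ∈ B := by
    intro r hr q hq
    by_cases h : ∃ q' ∈ B.biUnion Rule.K, q'.1 = q.1
    · obtain ⟨hmem, hq'q⟩ := h.choose_spec
      obtain ⟨r', hr', hq'⟩ := mem_biUnion.1 hmem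
      obtain rfl := hsame r hr r' hr' q hq _ hq' hq'q
      simp only [f, dif_pos h, hwf r' (hB hr') _ hq' q hq hq'q, hr']
    · refine iff_of_false (by simp only [f, dif_neg h, reduceCtorEq, not_false_eq_true])
        fun hrB => h ⟨q, mem_biUnion.2 ⟨r, hrB, hq⟩, rfl⟩
  refine ⟨f, fun a _ => ?_, ext fun r => ?_⟩
  · by_cases h : ∃ q ∈ B.biUnion Rule.K, q.1 = a
    · obtain ⟨hmem, ha⟩ := h.choose_spec
      obtain ⟨r, hr, hq⟩ := mem_biUnion.1 hmem
      have hVS := mem_VS_of_mem_K (hB hr) hq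
      rw [ha] at hVS
      simp only [f, dif_pos h, allowed, if_true]
      exact mem_union_left _ (mem_image_of_mem _ hVS)
    · simp only [f, dif_neg h, allowed, if_true]
      exact mem_union_right _ (mem_singleton_self _)
  · rw [mem_filter]
    refine ⟨fun ⟨hr, hall⟩ => ?_,
      fun hrB => ⟨hB hrB, fun q hq => (hsat r (hB hrB) q hq).2 hrB⟩⟩
    obtain ⟨q, hq⟩ := hne r hr
    exact (hsat r hr q hq).1 (hall q hq)

lemma two_pow_card_le_tCount {S : Finset Rule} {G : DGraph} (hwf : ∀ r ∈ S, r.WF)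
    (hne : ∀ r ∈ S, r.K.Nonempty) (hdisj : (S : Set Rule).PairwiseDisjoint Rule.attrs)
    (hrhs : Set.InjOn Rule.rhs S) (hG : G.IsDG S true) (hAD : G.SolvesAD S) :
    2 ^ S.card ≤ G.tCount := by
  rw [← card_powerset]
  refine card_le_card fun B hB => ?_
  obtain ⟨f, hf, hfB⟩ := exists_assignment_filter_eq hwf hne hdisj (mem_powerset.1 hB)
  obtain ⟨t, htn, ht, hτ⟩ := DGraph.exists_terminal_termSet_eq_filter hG hAD hrhs hf
  exact mem_image.2 ⟨t, mem_filter.2 ⟨mem_range.2 htn, ht⟩, hτ.trans hfB⟩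

lemma two_pow_card_le_T_EAD {S : Finset Rule} (hwf : ∀ r ∈ S, r.WF)
    (hne : ∀ r ∈ S, r.K.Nonempty) (hdisj : (S : Set Rule).PairwiseDisjoint Rule.attrs)
    (hrhs : Set.InjOn Rule.rhs S) (hex : ∃ G, TreeSolvesEAD S G) :
    2 ^ S.card ≤ T_EAD S := by
  obtain ⟨G, hG⟩ := hex
  refine le_csInf ⟨G.tCount, G, hG, rfl⟩ ?_
  rintro _ ⟨G', ⟨hDG, -, hAD⟩, rfl⟩
  exact two_pow_card_le_tCount hwf hne hdisj hrhs hDG hAD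

section HeapTree

variable {N : ℕ} {S : Finset Rule}

/-- Nodes are numbered as in a binary heap: the children of `v` are `2v+1` and `2v+2`, so
`v` sits at depth `log₂ (v + 1)`. -/
def heapDepth (v : ℕ) : ℕ := Nat.log 2 (v + 1)

/-- The answer given on the way to node `t` at depth `j`: the bits of `t + 1` below its
leading one spell the path from the root (`0` for the edge `0`, `1` for the edge `*`). -/
def heapValue (t j : ℕ) : Option ℕ :=
  if (t + 1) / 2 ^ (heapDepth t - (j + 1)) % 2 = 0 then some 0 else none

def heapTree (N : ℕ) (S : Finset Rule) : DGraph where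
  n := 2 ^ (N + 1) - 1
  root := 0
  label v := if v + 1 < 2 ^ N then Sum.inl (heapDepth v)
    else Sum.inr (S.filter fun r => ∀ q ∈ r.K, heapValue v q.1 = some q.2)
  edges := (range (2 ^ N - 1)).biUnion fun v =>
    {(v, some 0, 2 * v + 1), (v, none, 2 * v + 2)}

lemma heapDepth_of_div_two_eq {v w : ℕ} (h : (w + 1) / 2 = v + 1) :
    heapDepth w = heapDepth v + 1 := by
  rw [heapDepth, Nat.log_of_one_lt_of_le one_lt_two (by omega), h, heapDepth]

lemma mem_heapTree_edges {v w : ℕ} {l : Option ℕ} :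
    (v, l, w) ∈ (heapTree N S).edges ↔
      v + 1 < 2 ^ N ∧ (l = some 0 ∧ w = 2 * v + 1 ∨ l = none ∧ w = 2 * v + 2) := by
  have := Nat.one_le_two_pow (n := N)
  simp only [heapTree, mem_biUnion, mem_range, mem_insert, mem_singleton, Prod.mk.injEq]
  constructor
  · rintro ⟨u, hu, ⟨rfl, rfl, rfl⟩ | ⟨rfl, rfl, rfl⟩⟩ <;>
      simp [Nat.add_lt_of_lt_sub hu]
  · rintro ⟨hv, ⟨rfl, rfl⟩ | ⟨rfl, rfl⟩⟩ <;>
      exact ⟨v, Nat.lt_sub_of_add_lt hv, by simp⟩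

lemma heapTree_isTerminal_iff {v : ℕ} : (heapTree N S).IsTerminal v ↔ 2 ^ N ≤ v + 1 := by
  refine ⟨fun h => not_lt.1 fun hv => ?_, fun h e he hev => ?_⟩
  · exact h _ (mem_heapTree_edges.2 ⟨hv, .inl ⟨rfl, rfl⟩⟩) rfl
  · obtain ⟨u, l, w⟩ := e
    obtain rfl : u = v := hev
    exact absurd (mem_heapTree_edges.1 he).1 (not_lt.2 h)

lemma heapTree_label_of_lt {v : ℕ} (hv : v + 1 < 2 ^ N) :
    (heapTree N S).label v = Sum.inl (heapDepth v) :=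
  if_pos hv

lemma heapTree_termSet_of_le {t : ℕ} (ht : 2 ^ N ≤ t + 1) :
    (heapTree N S).termSet t = S.filter fun r => ∀ q ∈ r.K, heapValue t q.1 = some q.2 := by
  simp only [DGraph.termSet, heapTree, if_neg (not_lt.2 ht), Sum.elim_inr, id]

lemma heapTree_chainFrom {p : List (ℕ × Option ℕ)} {v t : ℕ}
    (h : (heapTree N S).chainFrom v p t) :
    heapDepth v ≤ heapDepth t ∧ (t + 1) / 2 ^ (heapDepth t - heapDepth v) = v + 1 ∧
      ∀ j, heapDepth v ≤ j → j < heapDepth t →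
        (j, heapValue t j) ∈ (heapTree N S).pathEqs p := by
  induction p generalizing v with
  | nil =>
    obtain rfl : v = t := h
    exact ⟨le_rfl, by simp, fun j hvj hjv => absurd hjv (not_lt.2 hvj)⟩
  | cons e p ih =>
    obtain ⟨u, l⟩ := e
    obtain ⟨huv, w, hw, hp⟩ := h
    obtain rfl : u = v := huv
    obtain ⟨hwt, hdiv, hmem⟩ := ih hp
    obtain ⟨hu, hl⟩ := mem_heapTree_edges.1 hw
    obtain ⟨b, hb, hwb, hlb⟩ : ∃ b < 2, w + 1 = 2 * (u + 1) + b ∧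
        l = if b = 0 then some 0 else none := by
      rcases hl with ⟨rfl, rfl⟩ | ⟨rfl, rfl⟩
      exacts [⟨0, by omega, by omega, rfl⟩, ⟨1, by omega, by omega, rfl⟩]
    have hdepth := heapDepth_of_div_two_eq (v := u) (w := w) (by omega)
    have hshift : heapDepth t - heapDepth u = heapDepth t - heapDepth w + 1 := by omega
    refine ⟨by omega, ?_, fun j hj hjt => ?_⟩
    · rw [hshift, pow_succ, ← Nat.div_div_eq_div_mul, hdiv]
      omega
    rw [DGraph.pathEqs_cons_of_label_eq (heapTree_label_of_lt hu)]
    rcases hj.eq_or_lt with rfl | hj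
    · have hbit : (t + 1) / 2 ^ (heapDepth t - (heapDepth u + 1)) % 2 = b := by
        rw [← hdepth, hdiv]
        omega
      rw [heapValue, hbit, hlb]
      exact mem_insert_self _ _
    · exact mem_insert_of_mem (hmem j (by omega) hjt)

lemma heapDepth_eq_of_isCompletePath {p : List (ℕ × Option ℕ)} {t : ℕ}
    (h : (heapTree N S).IsCompletePath p t) : heapDepth t = N := by
  obtain ⟨-, hterm, htn⟩ := h
  have htn' : t < 2 ^ (N + 1) - 1 := htn
  exact Nat.log_eq_of_pow_le_of_lt_pow (heapTree_isTerminal_iff.1 hterm) (by omega)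

lemma heapTree_solvesAD (hA : attrs S ⊆ range N) : (heapTree N S).SolvesAD S := by
  intro p t hpath _
  have hmem := (heapTree_chainFrom hpath.1).2.2
  rw [heapDepth_eq_of_isCompletePath hpath] at hmem
  have hval : ∀ r ∈ S, ∀ q ∈ r.K, (q.1, heapValue t q.1) ∈ (heapTree N S).pathEqs p :=
    fun r hr q hq => hmem _ (Nat.zero_le _) (mem_range.1 (hA (mem_attrs_of_mem_K hr hq)))
  rw [heapTree_termSet_of_le (heapTree_isTerminal_iff.1 hpath.2.1)]
  refine ⟨fun r hr x hx => ?_, fun r hrS hr _ hcons' => ?_⟩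
  · obtain ⟨hrS, hsat⟩ := mem_filter.1 hr
    obtain ⟨q, hq, rfl⟩ := mem_image.1 hx
    simpa only [hsat q hq] using hval r hrS q hq
  · obtain ⟨q, hq, hne⟩ : ∃ q ∈ r.K, heapValue t q.1 ≠ some q.2 := by
      simpa only [mem_filter, hrS, true_and, not_forall, exists_prop] using hr
    exact hne (hcons' _ (mem_union_right _ (hval r hrS q hq)) _
      (mem_union_left _ (mem_image_of_mem _ hq)) rfl)

lemma heapTree_lt_of_transGen {v w : ℕ} (h : Relation.TransGen (heapTree N S).step v w) :
    v < w := by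
  have hstep : ∀ {a b}, (heapTree N S).step a b → a < b := fun ⟨l, hl⟩ => by
    rcases (mem_heapTree_edges.1 hl).2 with ⟨-, rfl⟩ | ⟨-, rfl⟩ <;> omega
  induction h with
  | single h => exact hstep h
  | tail _ h ih => exact ih.trans (hstep h)

lemma heapTree_isDG (hA : attrs S = range N) (hV : ∀ a < N, VS S a = {0}) :
    (heapTree N S).IsDG S true := by
  have hpow : 2 ^ (N + 1) = 2 * 2 ^ N := by rw [pow_succ]; ring
  have hpos := Nat.one_le_two_pow (n := N)
  refine ⟨show 0 < 2 ^ (N + 1) - 1 by omega, ?_, ?_, fun v hv => ?_⟩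
  · rintro ⟨v, l, w⟩ he
    obtain ⟨hv, hc⟩ := mem_heapTree_edges.1 he
    show v < 2 ^ (N + 1) - 1 ∧ w < 2 ^ (N + 1) - 1
    rcases hc with ⟨-, rfl⟩ | ⟨-, rfl⟩ <;> omega
  · exact fun v hv => lt_irrefl v (heapTree_lt_of_transGen hv)
  by_cases hvN : v + 1 < 2 ^ N
  · have hdN : heapDepth v < N := Nat.log_lt_of_lt_pow (by omega) hvN
    rw [if_neg (mt heapTree_isTerminal_iff.1 (not_le.2 hvN))]
    refine ⟨heapDepth v, heapTree_label_of_lt hvN, hA ▸ mem_range.2 hdN, fun l => ?_, ?_⟩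
    · simp only [allowed, hV _ hdN, image_singleton, if_true, mem_union, mem_singleton]
      constructor
      · rintro ⟨w, hw⟩
        rcases (mem_heapTree_edges.1 hw).2 with ⟨rfl, -⟩ | ⟨rfl, -⟩ <;> simp
      · rintro (rfl | rfl)
        exacts [⟨_, mem_heapTree_edges.2 ⟨hvN, .inl ⟨rfl, rfl⟩⟩⟩,
          ⟨_, mem_heapTree_edges.2 ⟨hvN, .inr ⟨rfl, rfl⟩⟩⟩]
    · intro l w w' hw hw'
      rcases (mem_heapTree_edges.1 hw).2 with ⟨rfl, rfl⟩ | ⟨rfl, rfl⟩ <;>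
        rcases (mem_heapTree_edges.1 hw').2 with ⟨hl, rfl⟩ | ⟨hl, rfl⟩ <;> simp_all
  · rw [if_pos (heapTree_isTerminal_iff.2 (not_lt.1 hvN))]
    exact ⟨_, if_neg hvN, filter_subset _ _⟩

lemma heapTree_isTree : (heapTree N S).IsTree := by
  refine ⟨fun ⟨u, l, w⟩ he => ?_, fun v hv hv0 => ?_⟩
  · show w ≠ 0
    rcases (mem_heapTree_edges.1 he).2 with ⟨-, rfl⟩ | ⟨-, rfl⟩ <;> omega
  have hv' : v < 2 ^ (N + 1) - 1 := hv
  have hv0' : v ≠ 0 := hv0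
  have hpow : 2 ^ (N + 1) = 2 * 2 ^ N := by rw [pow_succ]; ring
  obtain ⟨l, hl⟩ : ∃ l : Option ℕ, (l = some 0 ∧ v = 2 * ((v - 1) / 2) + 1) ∨
      (l = none ∧ v = 2 * ((v - 1) / 2) + 2) := by
    rcases Nat.even_or_odd v with ⟨k, hk⟩ | ⟨k, hk⟩
    exacts [⟨none, .inr ⟨rfl, by omega⟩⟩, ⟨some 0, .inl ⟨rfl, by omega⟩⟩]
  refine ⟨((v - 1) / 2, l, v), ⟨mem_heapTree_edges.2 ⟨by omega, hl⟩, rfl⟩, ?_⟩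
  rintro ⟨u, l', w⟩ ⟨he, hwv⟩
  obtain rfl : w = v := hwv
  rcases (mem_heapTree_edges.1 he).2 with ⟨rfl, hw⟩ | ⟨rfl, hw⟩ <;>
    rcases hl with ⟨rfl, hv⟩ | ⟨rfl, hv⟩ <;>
      simp only [Prod.mk.injEq, reduceCtorEq, and_true, and_false] <;> omega

lemma exists_treeSolvesEAD (hA : attrs S = range N) (hV : ∀ a < N, VS S a = {0}) :
    ∃ G, TreeSolvesEAD S G :=
  ⟨heapTree N S, heapTree_isDG hA hV, heapTree_isTree, heapTree_solvesAD hA.le⟩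

end HeapTree

section HardSystem

def zeroRule (A : Finset ℕ) (σ : ℕ) : Rule := ⟨A.image fun j => (j, 0), σ⟩

variable {A : Finset ℕ} {σ n d : ℕ}

lemma mem_zeroRule_K {q : ℕ × ℕ} : q ∈ (zeroRule A σ).K ↔ q.1 ∈ A ∧ q.2 = 0 := by
  obtain ⟨j, x⟩ := q
  simp [zeroRule, eq_comm]

lemma zeroRule_wf : (zeroRule A σ).WF := by
  intro p hp q hq hpq
  rw [mem_zeroRule_K] at hp hq
  exact Prod.ext hpq (hp.2.trans hq.2.symm)

lemma zeroRule_attrs : (zeroRule A σ).attrs = A := by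
  simp [Rule.attrs, zeroRule, image_image, Function.comp_def]

lemma zeroRule_len : (zeroRule A σ).len = A.card :=
  card_image_of_injective _ fun _ _ h => (Prod.mk.inj h).1

def hardSystem (n d : ℕ) : Finset Rule :=
  insert (zeroRule (Ico n (n + d)) 0) ((range n).image fun i => zeroRule {i} (i + 1))

lemma mem_hardSystem {r : Rule} :
    r ∈ hardSystem n d ↔
      r = zeroRule (Ico n (n + d)) 0 ∨ ∃ i < n, r = zeroRule {i} (i + 1) := by
  simp [hardSystem, eq_comm]

lemma exists_zeroRule_of_mem_hardSystem {r : Rule} (hr : r ∈ hardSystem n d) :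
    ∃ A σ, r = zeroRule A σ := by
  rcases mem_hardSystem.1 hr with rfl | ⟨i, -, rfl⟩
  exacts [⟨_, _, rfl⟩, ⟨_, _, rfl⟩]

lemma hardSystem_wf : ∀ r ∈ hardSystem n d, r.WF := fun r hr => by
  obtain ⟨A, σ, rfl⟩ := exists_zeroRule_of_mem_hardSystem hr
  exact zeroRule_wf

lemma hardSystem_values_eq_zero : ∀ r ∈ hardSystem n d, ∀ q ∈ r.K, q.2 = 0 :=
  fun r hr q hq => by
    obtain ⟨A, σ, rfl⟩ := exists_zeroRule_of_mem_hardSystem hr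
    exact (mem_zeroRule_K.1 hq).2

lemma hardSystem_K_nonempty (hd : 0 < d) : ∀ r ∈ hardSystem n d, r.K.Nonempty := fun r hr => by
  rcases mem_hardSystem.1 hr with rfl | ⟨i, -, rfl⟩
  · exact ⟨(n, 0), mem_zeroRule_K.2 ⟨mem_Ico.2 ⟨le_rfl, by omega⟩, rfl⟩⟩
  · exact ⟨(i, 0), mem_zeroRule_K.2 ⟨mem_singleton_self i, rfl⟩⟩

lemma attrs_hardSystem : attrs (hardSystem n d) = range (n + d) := by
  ext a
  simp only [attrs, hardSystem, biUnion_insert, image_biUnion, zeroRule_attrs, mem_union,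
    mem_Ico, mem_biUnion, mem_range, mem_singleton]
  constructor
  · rintro (h | ⟨i, hi, rfl⟩) <;> omega
  · intro ha
    by_cases han : a < n
    exacts [.inr ⟨a, han, rfl⟩, .inl ⟨not_lt.1 han, ha⟩]

lemma pairwiseDisjoint_attrs_hardSystem :
    (hardSystem n d : Set Rule).PairwiseDisjoint Rule.attrs := by
  intro r hr r' hr' hne
  rcases mem_hardSystem.1 hr with rfl | ⟨i, hi, rfl⟩ <;>
    rcases mem_hardSystem.1 hr' with rfl | ⟨j, hj, rfl⟩ <;>
    simp only [Function.onFun, zeroRule_attrs, disjoint_singleton_left, disjoint_singleton_right,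
      mem_singleton, mem_Ico, not_and, not_lt] at hne ⊢
  · exact absurd rfl hne
  · omega
  · omega
  · exact fun hij => hne (hij ▸ rfl)

lemma rhs_injOn_hardSystem : Set.InjOn Rule.rhs (hardSystem n d) := by
  intro r hr r' hr' h
  rcases mem_hardSystem.1 hr with rfl | ⟨i, hi, rfl⟩ <;>
    rcases mem_hardSystem.1 hr' with rfl | ⟨j, hj, rfl⟩ <;>
    simp only [zeroRule] at h
  · rfl
  · omega
  · omega
  · obtain rfl : i = j := by omega
    rfl

lemma rhsSet_hardSystem : rhsSet (hardSystem n d) = range (n + 1) := by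
  ext x
  simp only [rhsSet, hardSystem, image_insert, image_image, mem_insert, mem_image, mem_range,
    Function.comp_def, zeroRule]
  constructor
  · rintro (rfl | ⟨i, hi, rfl⟩) <;> omega
  · intro hx
    rcases x with _ | x
    exacts [.inl rfl, .inr ⟨x, by omega, rfl⟩]

lemma card_hardSystem : (hardSystem n d).card = n + 1 :=
  calc (hardSystem n d).card = (rhsSet (hardSystem n d)).card :=
        (card_image_of_injOn rhs_injOn_hardSystem).symm
    _ = n + 1 := by rw [rhsSet_hardSystem, card_range]

lemma VS_hardSystem {a : ℕ} (ha : a < n + d) : VS (hardSystem n d) a = {0} :=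
  VS_eq_singleton_zero hardSystem_values_eq_zero (attrs_hardSystem ▸ mem_range.2 ha)

lemma nPar_hardSystem : nPar (hardSystem n d) = n + d := by
  rw [nPar, attrs_hardSystem, card_range]

lemma kPar_hardSystem (hd : 0 < d) : kPar (hardSystem n d) = 1 := by
  have hcard : ∀ a ∈ range (n + d), (VS (hardSystem n d) a).card = 1 := fun a ha => by
    rw [VS_hardSystem (mem_range.1 ha), card_singleton]
  rw [kPar, attrs_hardSystem, sup_congr rfl hcard]
  exact sup_const ⟨0, mem_range.2 (by omega)⟩ 1

lemma dPar_hardSystem (hd : 0 < d) : dPar (hardSystem n d) = d := by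
  refine le_antisymm (Finset.sup_le fun r hr => ?_)
    (le_sup_of_le (mem_hardSystem.2 (.inl rfl)) (by simp [zeroRule_len]))
  rcases mem_hardSystem.1 hr with rfl | ⟨i, -, rfl⟩
  · simp [zeroRule_len]
  · rw [zeroRule_len, card_singleton]
    exact hd

lemma reduced_hardSystem (hd : 0 < d) : Reduced (hardSystem n d) := by
  refine ⟨?_, ?_, fun a ha => ?_, (dPar_hardSystem hd).symm ▸ hd⟩
  · rw [attrs_hardSystem, nPar_hardSystem]
    exact range_subset_range.2 (Nat.le_succ _)
  · rw [rhsSet_hardSystem, card_range]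
    exact range_subset_range.2 (Nat.le_succ _)
  · rw [VS_hardSystem (mem_range.1 (attrs_hardSystem ▸ ha)), kPar_hardSystem hd]
    simp

end HardSystem

theorem statement_4_general (n d : ℕ) (hd : 0 < d) :
    ∃ S : Finset Rule, S.Nonempty ∧ (∀ r ∈ S, r.WF) ∧ Reduced S ∧
      nPar S = n + d ∧ kPar S = 1 ∧ dPar S = d ∧ S.card = n + 1 ∧
      2 ^ (n + 1) ≤ T_EAD S := by
  refine ⟨hardSystem n d, insert_nonempty _ _, hardSystem_wf, reduced_hardSystem hd,
    nPar_hardSystem, kPar_hardSystem hd, dPar_hardSystem hd, card_hardSystem, ?_⟩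
  have hsolvable : ∃ G, TreeSolvesEAD (hardSystem n d) G :=
    exists_treeSolvesEAD attrs_hardSystem fun _ ha => VS_hardSystem ha
  simpa only [card_hardSystem] using two_pow_card_le_T_EAD hardSystem_wf
    (hardSystem_K_nonempty hd) pairwiseDisjoint_attrs_hardSystem rhs_injOn_hardSystem hsolvable

/-- Lemma 11(a): for positive n, d there is a reduced system S with
n(S) = n + d, k(S) = 1, d(S) = d, |S| = n + 1 and T_EAD(S) ≥ 2^{n+1}. -/
theorem statement_4 (n d : ℕ) (hn : 0 < n) (hd : 0 < d) :
    ∃ S : Finset Rule, S.Nonempty ∧ (∀ r ∈ S, r.WF) ∧ Reduced S ∧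
      nPar S = n + d ∧ kPar S = 1 ∧ dPar S = d ∧ S.card = n + 1 ∧
      2 ^ (n + 1) ≤ T_EAD S :=
  statement_4_general n d hd

end DRS

end
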